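/- Let (X_v)_{v∈V} be a family of random variables on a probability space (Ω, 𝓕, P) indexed by a finite set V, each valued in a nonempty finite type, and let C ∈ V. If M ⊆ V \ {C} is a Markov blanket of C, then M carries all the predictive information about C contained in the full feature set: for every function f from the value type of X_C to ℝ, the conditional expectation E[f(X_C) ∣ σ(X_v : v ∈ V \ {C})] equals E[f(X_C) ∣ σ(X_m : m ∈ M)] P-almost surely. -/

import Mathlib

open MeasureTheory ProbabilityTheory Set

namespace CFS

variable {V : Type*}

/-- Parents of `v`: vertices with an edge into `v`. -/
def Pa (E : V → V → Prop) (v : V) : Set V := {u | E u v}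

/-- Children of `v`: vertices with an edge from `v`. -/
def Ch (E : V → V → Prop) (v : V) : Set V := {u | E v u}

/-- Descendants of `v`: vertices reachable from `v` by a nonempty directed path. -/
def Desc (E : V → V → Prop) (v : V) : Set V := {u | Relation.TransGen E v u}

/-- Spouses of `v`: the other parents of the children of `v`. -/
def Sp (E : V → V → Prop) (v : V) : Set V := {u | u ≠ v ∧ ∃ w, E u w ∧ E v w}

/-- The Markov blanket set `mb(v)` in the graph: parents, children and spouses. -/
def mb (E : V → V → Prop) (v : V) : Set V := Pa E v ∪ Ch E v ∪ Sp E v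

/-- The edge relation is acyclic (defines a DAG). -/
def Acyclic (E : V → V → Prop) : Prop := ∀ v, ¬ Relation.TransGen E v v

/-- Adjacency: an edge in either direction. -/
def Adj (E : V → V → Prop) (u v : V) : Prop := E u v ∨ E v u

/-- `f 0, f 1, …, f n` is an undirected path between `i` and `j`:
distinct vertices, consecutive ones adjacent. -/
structure IsUPath (E : V → V → Prop) (i j : V) (n : ℕ) (f : ℕ → V) : Prop where
  pos : 0 < n
  start : f 0 = i
  finish : f n = j
  inj : ∀ s ≤ n, ∀ t ≤ n, f s = f t → s = t
  adj : ∀ t < n, Adj E (f t) (f (t + 1))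

/-- The interior vertex at position `t` of the path `f` is a collider:
both incident edges of the path point into it. -/
def ColliderAt (E : V → V → Prop) (f : ℕ → V) (t : ℕ) : Prop :=
  E (f (t - 1)) (f t) ∧ E (f (t + 1)) (f t)

/-- The path `f 0, …, f n` is blocked by `S`: some interior non-collider lies in `S`,
or some interior collider is such that neither it nor any of its descendants lies in `S`. -/
def Blocked (E : V → V → Prop) (S : Set V) (n : ℕ) (f : ℕ → V) : Prop :=
  ∃ t, 0 < t ∧ t < n ∧
    ((¬ ColliderAt E f t ∧ f t ∈ S) ∨
      (ColliderAt E f t ∧ f t ∉ S ∧ ∀ d ∈ Desc E (f t), d ∉ S))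

/-- `i` and `j` are d-separated by `S`: every undirected path between them is blocked by `S`. -/
def DSep (E : V → V → Prop) (i j : V) (S : Set V) : Prop :=
  ∀ n f, IsUPath E i j n f → Blocked E S n f

/-- The sets `A` and `B` are d-separated by `S`. -/
def DSepSet (E : V → V → Prop) (A B S : Set V) : Prop :=
  ∀ i ∈ A, ∀ j ∈ B, DSep E i j S

variable {Ω Val : Type*} [mΩ : MeasurableSpace Ω] [MeasurableSpace Val]

/-- The σ-algebra generated by the family of random variables `(X v)_{v ∈ A}`. -/
def famSigma (X : V → Ω → Val) (A : Set V) : MeasurableSpace Ω :=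
  ⨆ v ∈ A, MeasurableSpace.comap (X v) inferInstance

theorem famSigma_le {X : V → Ω → Val} (hX : ∀ v, Measurable (X v)) (A : Set V) :
    famSigma X A ≤ mΩ :=
  iSup₂_le fun v _ => (hX v).comap_le

/-- The families `(X a)_{a ∈ A}` and `(X b)_{b ∈ B}` are conditionally independent
given the family `(X s)_{s ∈ S}`. -/
def CondIndepFam [StandardBorelSpace Ω] (X : V → Ω → Val) (hX : ∀ v, Measurable (X v))
    (P : Measure Ω) [IsFiniteMeasure P] (S A B : Set V) : Prop :=
  CondIndep (famSigma X S) (famSigma X A) (famSigma X B) (famSigma_le hX S) P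

/-- The Markov condition: every variable is conditionally independent of its
non-descendants (other than itself and its parents) given its parents. -/
def MarkovCondition [StandardBorelSpace Ω] (E : V → V → Prop) (X : V → Ω → Val)
    (hX : ∀ v, Measurable (X v)) (P : Measure Ω) [IsFiniteMeasure P] : Prop :=
  ∀ v, CondIndepFam X hX P (Pa E v) {v} (univ \ ({v} ∪ Desc E v ∪ Pa E v))

/-- `M ⊆ V \ {C}` is a Markov blanket of `C`: conditioned on `(X m)_{m ∈ M}`,
all other variables are independent of `X C`. -/
def IsMarkovBlanket [StandardBorelSpace Ω] (X : V → Ω → Val) (hX : ∀ v, Measurable (X v))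
    (P : Measure Ω) [IsFiniteMeasure P] (C : V) (M : Set V) : Prop :=
  C ∉ M ∧ CondIndepFam X hX P M {C} (univ \ (M ∪ {C}))

/-- A Markov boundary of `C` is a Markov blanket of `C` no proper subset of which
is a Markov blanket of `C`. -/
def IsMarkovBoundary [StandardBorelSpace Ω] (X : V → Ω → Val) (hX : ∀ v, Measurable (X v))
    (P : Measure Ω) [IsFiniteMeasure P] (C : V) (M : Set V) : Prop :=
  IsMarkovBlanket X hX P C M ∧ ∀ M' ⊂ M, ¬ IsMarkovBlanket X hX P C M'

/-- Faithfulness: conditional independence holds exactly when d-separation holds. -/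
def Faithful [StandardBorelSpace Ω] (E : V → V → Prop) (X : V → Ω → Val)
    (hX : ∀ v, Measurable (X v)) (P : Measure Ω) [IsFiniteMeasure P] : Prop :=
  ∀ A B S : Set V, A.Nonempty → B.Nonempty →
    Disjoint A B → Disjoint A S → Disjoint B S →
    (CondIndepFam X hX P S A B ↔ DSepSet E A B S)

/-- `v` is strongly relevant to `C`: `X C` and `X v` are not conditionally independent
given all the remaining variables. -/
def StronglyRelevant [StandardBorelSpace Ω] (X : V → Ω → Val) (hX : ∀ v, Measurable (X v))
    (P : Measure Ω) [IsFiniteMeasure P] (C v : V) : Prop :=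
  ¬ CondIndepFam X hX P (univ \ {C, v}) {C} {v}

end CFS

/-! Conditional independence of `m₁` and `m₂` given `m'` says that
`μ⟦t ∩ s | m'⟧ = μ⟦t | m'⟧ * μ⟦s | m'⟧` for `t ∈ m₁`, `s ∈ m₂`. Pulling out the `m'`-measurable
factor and integrating over `s' ∈ m'` shows that `μ⟦t | m'⟧` and `1_t` have the same integral over
every `s' ∩ s`; these sets form a π-system generating `m' ⊔ m₂`, so `μ⟦t | m'⟧` is also
`μ⟦t | m' ⊔ m₂⟧`. A function of the finitely-valued `X C` is a finite combination of indicators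
of events `{X C = a}`, and all the variables other than `X C` generate the join of the σ-algebras
of the blanket `M` and of the remaining variables. -/

namespace MeasureTheory

variable {Ω : Type*} {mΩ : MeasurableSpace Ω} {μ : Measure Ω}

theorem _root_.MeasurableSpace.sup_eq_generateFrom_inter (m₁ m₂ : MeasurableSpace Ω) :
    m₁ ⊔ m₂ = MeasurableSpace.generateFrom
      {s | ∃ s₁ s₂, MeasurableSet[m₁] s₁ ∧ MeasurableSet[m₂] s₂ ∧ s₁ ∩ s₂ = s} := by
  refine le_antisymm (sup_le ?_ ?_) ?_
  · exact fun s hs => MeasurableSpace.measurableSet_generateFrom ⟨s, univ, hs, .univ, inter_univ s⟩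
  · exact fun s hs => MeasurableSpace.measurableSet_generateFrom ⟨univ, s, .univ, hs, univ_inter s⟩
  · refine MeasurableSpace.generateFrom_le ?_
    rintro _ ⟨s₁, s₂, hs₁, hs₂, rfl⟩
    exact (le_sup_left (a := m₁) _ hs₁).inter (le_sup_right (a := m₁) _ hs₂)

theorem isPiSystem_inter_measurableSet (m₁ m₂ : MeasurableSpace Ω) :
    IsPiSystem {s | ∃ s₁ s₂, MeasurableSet[m₁] s₁ ∧ MeasurableSet[m₂] s₂ ∧ s₁ ∩ s₂ = s} := by
  rintro _ ⟨s₁, s₂, hs₁, hs₂, rfl⟩ _ ⟨t₁, t₂, ht₁, ht₂, rfl⟩ -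
  exact ⟨s₁ ∩ t₁, s₂ ∩ t₂, hs₁.inter ht₁, hs₂.inter ht₂, inter_inter_inter_comm _ _ _ _⟩

theorem setIntegral_eq_of_isPiSystem {E : Type*} [NormedAddCommGroup E] [NormedSpace ℝ E]
    {m : MeasurableSpace Ω} (hm : m ≤ mΩ) {p : Set (Set Ω)} (hgen : m = .generateFrom p)
    (hp : IsPiSystem p) {f g : Ω → E} (hf : Integrable f μ) (hg : Integrable g μ)
    (h_univ : ∫ ω, f ω ∂μ = ∫ ω, g ω ∂μ) (h_basic : ∀ s ∈ p, ∫ ω in s, f ω ∂μ = ∫ ω in s, g ω ∂μ)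
    {s : Set Ω} (hs : MeasurableSet[m] s) :
    ∫ ω in s, f ω ∂μ = ∫ ω in s, g ω ∂μ := by
  induction s, hs using MeasurableSpace.induction_on_inter hgen hp with
  | empty => simp
  | basic s hs => exact h_basic s hs
  | compl s hs ih =>
    have hf_add := integral_add_compl (hm s hs) hf
    have hg_add := integral_add_compl (hm s hs) hg
    rw [← sub_eq_of_eq_add' hf_add.symm, ← sub_eq_of_eq_add' hg_add.symm, ih, h_univ]
  | iUnion s hdisj hs ih =>
    rw [integral_iUnion (fun i => hm _ (hs i)) hdisj hf.integrableOn,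
      integral_iUnion (fun i => hm _ (hs i)) hdisj hg.integrableOn]
    exact tsum_congr ih

end MeasureTheory

namespace ProbabilityTheory

open MeasureTheory

variable {Ω : Type*} {m' m₁ m₂ mΩ : MeasurableSpace Ω} {μ : Measure Ω} [IsFiniteMeasure μ]

theorem condExp_comp_ae_eq_sum {α : Type*} [Fintype α] [MeasurableSpace α]
    [MeasurableSingletonClass α] {Y : Ω → α} (hY : Measurable Y) (g : α → ℝ)
    (m : MeasurableSpace Ω) :
    μ[fun ω => g (Y ω) | m] =ᵐ[μ] ∑ a, g a • μ⟦Y ⁻¹' {a} | m⟧ := by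
  have hdecomp : (fun ω => g (Y ω)) = ∑ a, g a • (Y ⁻¹' {a}).indicator fun _ => (1 : ℝ) := by
    ext ω
    classical
    simp [Finset.sum_apply, indicator_apply]
  rw [hdecomp]
  refine (condExp_finsetSum (fun a _ => ((integrable_const 1).indicator
    (hY (measurableSet_singleton a))).smul (g a)) m).trans ?_
  filter_upwards [ae_all_iff.2 fun a => condExp_smul (μ := μ) (g a)
    ((Y ⁻¹' {a}).indicator fun _ => (1 : ℝ)) m] with ω hω
  simp only [Finset.sum_apply, hω]

variable [StandardBorelSpace Ω]

theorem CondIndep.setIntegral_inter_condExp_indicator (hm' : m' ≤ mΩ) (hm₁ : m₁ ≤ mΩ)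
    (hm₂ : m₂ ≤ mΩ) (hCI : CondIndep m' m₁ m₂ hm' μ) {t s₁ s₂ : Set Ω}
    (ht : MeasurableSet[m₁] t) (hs₁ : MeasurableSet[m'] s₁) (hs₂ : MeasurableSet[m₂] s₂) :
    ∫ ω in s₁ ∩ s₂, (μ⟦t | m'⟧) ω ∂μ = ∫ ω in s₁ ∩ s₂, t.indicator (fun _ => (1 : ℝ)) ω ∂μ := by
  set h : Ω → ℝ := μ⟦t | m'⟧
  have hs₂_int : Integrable (s₂.indicator fun _ => (1 : ℝ)) μ :=
    (integrable_const 1).indicator (hm₂ _ hs₂)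
  have hts₂_int : Integrable ((t ∩ s₂).indicator fun _ => (1 : ℝ)) μ :=
    (integrable_const 1).indicator ((hm₁ _ ht).inter (hm₂ _ hs₂))
  have hmul_eq : s₂.indicator h = h * s₂.indicator fun _ => 1 := by
    ext ω; by_cases hω : ω ∈ s₂ <;> simp [hω]
  have hmul_int : Integrable (h * s₂.indicator fun _ => (1 : ℝ)) μ :=
    hmul_eq ▸ integrable_condExp.indicator (hm₂ _ hs₂)
  have hpull : μ[h * s₂.indicator (fun _ => (1 : ℝ)) | m'] =ᵐ[μ] h * μ⟦s₂ | m'⟧ :=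
    condExp_mul_of_stronglyMeasurable_left stronglyMeasurable_condExp hmul_int hs₂_int
  have hfactor : μ⟦t ∩ s₂ | m'⟧ =ᵐ[μ] h * μ⟦s₂ | m'⟧ :=
    (condIndep_iff m' m₁ m₂ hm' hm₁ hm₂ μ).1 hCI t s₂ ht hs₂
  calc ∫ ω in s₁ ∩ s₂, h ω ∂μ
      = ∫ ω in s₁, (h * s₂.indicator fun _ => (1 : ℝ)) ω ∂μ := by
        rw [← hmul_eq, setIntegral_indicator (hm₂ _ hs₂)]
    _ = ∫ ω in s₁, μ[h * s₂.indicator (fun _ => (1 : ℝ)) | m'] ω ∂μ :=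
        (setIntegral_condExp hm' hmul_int hs₁).symm
    _ = ∫ ω in s₁, (μ⟦t ∩ s₂ | m'⟧) ω ∂μ :=
        integral_congr_ae (ae_restrict_of_ae (hpull.trans hfactor.symm))
    _ = ∫ ω in s₁, (t ∩ s₂).indicator (fun _ => (1 : ℝ)) ω ∂μ :=
        setIntegral_condExp hm' hts₂_int hs₁
    _ = ∫ ω in s₁ ∩ s₂, t.indicator (fun _ => (1 : ℝ)) ω ∂μ := by
        rw [inter_comm t, ← indicator_indicator, setIntegral_indicator (hm₂ _ hs₂)]

theorem CondIndep.condExp_indicator_sup_ae_eq (hm' : m' ≤ mΩ) (hm₁ : m₁ ≤ mΩ)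
    (hm₂ : m₂ ≤ mΩ) (hCI : CondIndep m' m₁ m₂ hm' μ) {t : Set Ω} (ht : MeasurableSet[m₁] t) :
    μ⟦t | m' ⊔ m₂⟧ =ᵐ[μ] μ⟦t | m'⟧ := by
  have ht_int : Integrable (t.indicator fun _ => (1 : ℝ)) μ :=
    (integrable_const 1).indicator (hm₁ _ ht)
  refine (ae_eq_condExp_of_forall_setIntegral_eq (sup_le hm' hm₂) ht_int
    (fun _ _ _ => integrable_condExp.integrableOn) (fun s hs _ => ?_)
    (stronglyMeasurable_condExp.mono (le_sup_left : m' ≤ m' ⊔ m₂)).aestronglyMeasurable).symm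
  refine setIntegral_eq_of_isPiSystem (sup_le hm' hm₂)
    (MeasurableSpace.sup_eq_generateFrom_inter m' m₂) (isPiSystem_inter_measurableSet m' m₂)
    integrable_condExp ht_int (integral_condExp hm') ?_ hs
  rintro _ ⟨s₁, s₂, hs₁, hs₂, rfl⟩
  exact hCI.setIntegral_inter_condExp_indicator hm' hm₁ hm₂ ht hs₁ hs₂


theorem CondIndep.condExp_comp_sup_ae_eq (hm' : m' ≤ mΩ) (hm₁ : m₁ ≤ mΩ)
    (hm₂ : m₂ ≤ mΩ) (hCI : CondIndep m' m₁ m₂ hm' μ) {α : Type*} [Fintype α] [MeasurableSpace α]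
    [MeasurableSingletonClass α] {Y : Ω → α} (hY : Measurable[m₁] Y) (g : α → ℝ) :
    μ[fun ω => g (Y ω) | m' ⊔ m₂] =ᵐ[μ] μ[fun ω => g (Y ω) | m'] := by
  have hY' : Measurable Y := hY.mono hm₁ le_rfl
  filter_upwards [condExp_comp_ae_eq_sum hY' g (m' ⊔ m₂), condExp_comp_ae_eq_sum hY' g m',
    ae_all_iff.2 fun a => hCI.condExp_indicator_sup_ae_eq hm' hm₁ hm₂
      (hY (measurableSet_singleton a))] with ω h_sup h_m' h_ind
  simp only [h_sup, h_m', Finset.sum_apply, Pi.smul_apply, h_ind]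

end ProbabilityTheory

namespace CFS

variable {V Ω Val : Type*} {mΩ : MeasurableSpace Ω} [MeasurableSpace Val]

theorem famSigma_union (X : V → Ω → Val) (A B : Set V) :
    famSigma X (A ∪ B) = famSigma X A ⊔ famSigma X B :=
  iSup_union

theorem measurable_famSigma_of_mem (X : V → Ω → Val) {A : Set V} {v : V} (hv : v ∈ A) :
    Measurable[famSigma X A] (X v) :=
  Measurable.of_comap_le (le_iSup₂ (f := fun w (_ : w ∈ A) => MeasurableSpace.comap (X w) _) v hv)

theorem famSigma_diff_singleton_eq_sup (X : V → Ω → Val) {C : V} {M : Set V} (hC : C ∉ M) :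
    famSigma X (univ \ {C}) = famSigma X M ⊔ famSigma X (univ \ (M ∪ {C})) := by
  rw [← famSigma_union]
  congr 1
  ext v
  by_cases hv : v = C
  · subst hv; simp [hC]
  · by_cases hvM : v ∈ M <;> simp [hv, hvM]

end CFS

open CFS

theorem stmt_11_general
    {V Ω Val : Type*} [MeasurableSpace Ω] [StandardBorelSpace Ω]
    [MeasurableSpace Val] [DiscreteMeasurableSpace Val] [Fintype Val]
    (X : V → Ω → Val) (hX : ∀ v, Measurable (X v))
    (P : MeasureTheory.Measure Ω) [MeasureTheory.IsProbabilityMeasure P]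
    (C : V) (M : Set V) (hM : IsMarkovBlanket X hX P C M)
    (f : Val → ℝ) :
    P[fun ω => f (X C ω)|famSigma X (Set.univ \ {C})]
      =ᵐ[P] P[fun ω => f (X C ω)|famSigma X M] := by
  rw [famSigma_diff_singleton_eq_sup X hM.1]
  exact hM.2.condExp_comp_sup_ae_eq (famSigma_le hX _) (famSigma_le hX _) (famSigma_le hX _)
    (measurable_famSigma_of_mem X (mem_singleton C)) f

/-- A Markov blanket `M` of `C` carries all the predictive information about `C`:
conditional expectations of functions of `X C` given all other features and given
only the features in `M` agree almost surely. -/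
theorem stmt_11
    {V Ω Val : Type*} [Fintype V] [MeasurableSpace Ω] [StandardBorelSpace Ω]
    [MeasurableSpace Val] [DiscreteMeasurableSpace Val] [Fintype Val] [Nonempty Val]
    (X : V → Ω → Val) (hX : ∀ v, Measurable (X v))
    (P : MeasureTheory.Measure Ω) [MeasureTheory.IsProbabilityMeasure P]
    (C : V) (M : Set V) (hM : IsMarkovBlanket X hX P C M)
    (f : Val → ℝ) :
    P[fun ω => f (X C ω)|famSigma X (Set.univ \ {C})]
      =ᵐ[P] P[fun ω => f (X C ω)|famSigma X M] :=
  stmt_11_general X hX P C M hM f
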